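/- arXiv:1909.03896 — 10 statements merged into one kernel-verified Lean document; each statement's English description precedes it below -/
import Mathlib

section
/- Let G be a finite simple graph on a vertex set V, and let G' be the simple graph on V × {0,1} in which (u,i) and (v,j) are adjacent if and only if either (u = v and i ≠ j) or u and v are adjacent in G. Then for every natural number k: G has an independent set of size at least k if and only if there exists a set S ⊆ V × {0,1} with |S| ≥ 2k such that the subgraph of G' induced by S is bipartite (2-colorable). -/
/-- The "doubled" graph `G'` on `V × Fin 2`: `(u,i)` and `(v,j)` are adjacent iff
either `u = v` and `i ≠ j`, or `u` and `v` are adjacent in `G`. -/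
def doubledGraph {V : Type*} (G : SimpleGraph V) : SimpleGraph (V × Fin 2) where
  Adj a b := (a.1 = b.1 ∧ a.2 ≠ b.2) ∨ G.Adj a.1 b.1
  symm := by
    constructor
    rintro ⟨u, i⟩ ⟨v, j⟩ (⟨h1, h2⟩ | h)
    · exact Or.inl ⟨h1.symm, h2.symm⟩
    · exact Or.inr h.symm
  loopless := by
    constructor
    rintro ⟨u, i⟩ (⟨-, h⟩ | h)
    · exact h rfl
    · exact G.irrefl h

/-!
If `I` is independent in `G`, then `I × {0,1}` has twice the size and is 2-coloured by the second
coordinate. Conversely, a largest colour class of a 2-colouring of `S` has at least `#S / 2`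
elements and is independent in `G'`; as `(u,0)` and `(u,1)` are adjacent in `G'`, it projects
injectively onto an independent set of `G`.
-/

open Finset

namespace SimpleGraph

theorem Colorable.exists_isIndepSet_card_le_mul {α : Type*} {H : SimpleGraph α} {S : Finset α}
    {n : ℕ} (h : (H.induce (S : Set α)).Colorable n) :
    ∃ T ⊆ S, H.IsIndepSet (T : Set α) ∧ #S ≤ n * #T := by
  classical
  obtain ⟨c⟩ := h
  rcases S.eq_empty_or_nonempty with rfl | ⟨a, ha⟩
  · exact ⟨∅, subset_refl _, by simp, by simp⟩
  let colorClass (i : Fin n) : Finset α :=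
    {x ∈ (univ : Finset (S : Set α)) | c x = i}.map (Function.Embedding.subtype _)
  obtain ⟨i, -, hi⟩ := (univ : Finset (Fin n)).exists_max_image (fun i ↦ #(colorClass i))
    ⟨c ⟨a, ha⟩, mem_univ _⟩
  refine ⟨colorClass i, fun x hx ↦ ?_, fun x hx y hy _ ↦ ?_, ?_⟩
  · obtain ⟨⟨x, hxS⟩, -, rfl⟩ := mem_map.mp hx
    exact hxS
  · obtain ⟨x, hxi, rfl⟩ := mem_map.mp (mem_coe.mp hx)
    obtain ⟨y, hyi, rfl⟩ := mem_map.mp (mem_coe.mp hy)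
    exact fun hadj ↦ c.valid hadj ((mem_filter.mp hxi).2.trans (mem_filter.mp hyi).2.symm)
  · calc #S = #(univ : Finset (S : Set α)) := by simp
      _ = ∑ j, #(colorClass j) := by
          rw [card_eq_sum_card_fiberwise (f := c) (t := univ) fun _ _ ↦ mem_univ _]
          simp [colorClass]
      _ ≤ n * #(colorClass i) := by
          simpa using sum_le_card_nsmul univ _ _ fun j _ ↦ hi j (mem_univ j)

end SimpleGraph

section doubledGraph

variable {V : Type*} {G : SimpleGraph V}

theorem doubledGraph_induce_prod_univ_colorable {s : Set V} (hs : G.IsIndepSet s) :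
    ((doubledGraph G).induce (s ×ˢ Set.univ)).Colorable 2 :=
  ⟨SimpleGraph.Coloring.mk (fun x ↦ x.1.2) fun {x y} hxy ↦
    hxy.elim And.right fun h ↦ (hs x.2.1 y.2.1 (fun he ↦ G.ne_of_adj h he) h).elim⟩

theorem injOn_fst_of_isIndepSet_doubledGraph {T : Set (V × Fin 2)}
    (hT : (doubledGraph G).IsIndepSet T) : T.InjOn Prod.fst :=
  fun _ hx _ hy hxy ↦ by_contra fun hne ↦
    hT hx hy hne (Or.inl ⟨hxy, fun h ↦ hne (Prod.ext hxy h)⟩)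

theorem isIndepSet_image_fst_of_isIndepSet_doubledGraph {T : Set (V × Fin 2)}
    (hT : (doubledGraph G).IsIndepSet T) : G.IsIndepSet (Prod.fst '' T) := by
  rintro _ ⟨x, hx, rfl⟩ _ ⟨y, hy, rfl⟩ hne
  exact fun hxy ↦ hT hx hy (fun he ↦ hne (congrArg Prod.fst he)) (Or.inr hxy)

end doubledGraph

theorem stmt0_general {V : Type*} (G : SimpleGraph V) (k : ℕ) :
    (∃ I : Finset V, (∀ u ∈ I, ∀ v ∈ I, ¬ G.Adj u v) ∧ k ≤ I.card) ↔
      (∃ S : Finset (V × Fin 2), 2 * k ≤ S.card ∧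
        ((doubledGraph G).induce (↑S : Set (V × Fin 2))).Colorable 2) := by
  classical
  constructor
  · rintro ⟨I, hI, hk⟩
    refine ⟨I ×ˢ univ, by simp only [card_product, card_univ, Fintype.card_fin]; omega, ?_⟩
    rw [coe_product, coe_univ]
    exact doubledGraph_induce_prod_univ_colorable fun u hu v hv _ ↦ hI u hu v hv
  · rintro ⟨S, hk, hS⟩
    obtain ⟨T, -, hT, hST⟩ := hS.exists_isIndepSet_card_le_mul
    refine ⟨T.image Prod.fst, ?_, ?_⟩
    · have hI := isIndepSet_image_fst_of_isIndepSet_doubledGraph hT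
      rw [← coe_image] at hI
      exact fun u hu v hv hadj ↦ hI hu hv (G.ne_of_adj hadj) hadj
    · rw [card_image_of_injOn (injOn_fst_of_isIndepSet_doubledGraph hT)]
      omega

theorem stmt0 {V : Type*} [Fintype V] (G : SimpleGraph V) (k : ℕ) :
    (∃ I : Finset V, (∀ u ∈ I, ∀ v ∈ I, ¬ G.Adj u v) ∧ k ≤ I.card) ↔
      (∃ S : Finset (V × Fin 2), 2 * k ≤ S.card ∧
        ((doubledGraph G).induce (↑S : Set (V × Fin 2))).Colorable 2) :=
  stmt0_general G k
end

section
/- Let k be a real number and let P be a finite set of points in the Euclidean plane ℝ² such that for every p ∈ P the closed disk of radius 1 centered at p is contained in the square [0,k] × [0,k]. If no three pairwise distinct points of P are pairwise at Euclidean distance at most 2 (i.e., the intersection graph of the corresponding unit disks is triangle-free), then |P| ≤ k². -/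
theorem stmt2 (k : ℝ) (P : Finset (EuclideanSpace ℝ (Fin 2)))
    (hsq : ∀ p ∈ P, Metric.closedBall p 1 ⊆
      {q : EuclideanSpace ℝ (Fin 2) | q 0 ∈ Set.Icc 0 k ∧ q 1 ∈ Set.Icc 0 k})
    (htf : ∀ a ∈ P, ∀ b ∈ P, ∀ c ∈ P, a ≠ b → a ≠ c → b ≠ c →
      ¬ (dist a b ≤ 2 ∧ dist a c ≤ 2 ∧ dist b c ≤ 2)) :
    (P.card : ℝ) ≤ k ^ 2 := by
  classical
  rcases P.eq_empty_or_nonempty with rfl | ⟨p₀, hp₀⟩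
  · simpa using sq_nonneg k
  set s : ℝ := Real.sqrt 2 with hs
  have hs2 : s ^ 2 = 2 := Real.sq_sqrt (by norm_num)
  have hs1 : 1 ≤ s := by nlinarith [Real.sqrt_nonneg 2]
  have hs32 : s ≤ 3/2 := by nlinarith [Real.sqrt_nonneg 2]
  have hspos : 0 < s := by linarith
  -- coordinate bounds
  have hmem : ∀ p ∈ P, ∀ i : Fin 2,
      p + EuclideanSpace.single i (1:ℝ) ∈ Metric.closedBall p 1 ∧
      p - EuclideanSpace.single i (1:ℝ) ∈ Metric.closedBall p 1 := by
    intro p hp i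
    constructor <;> simp [Metric.mem_closedBall, dist_eq_norm, EuclideanSpace.norm_single]
  have happ : ∀ (p : EuclideanSpace ℝ (Fin 2)) (i j : Fin 2),
      (p + EuclideanSpace.single i (1:ℝ)) j = p j + (if j = i then (1:ℝ) else 0) ∧
      (p - EuclideanSpace.single i (1:ℝ)) j = p j - (if j = i then (1:ℝ) else 0) := by
    intro p i j
    constructor <;> simp [EuclideanSpace.single_apply]
  have hc0 : ∀ p ∈ P, 1 ≤ p 0 ∧ p 0 ≤ k - 1 := by
    intro p hp
    have h1 := hsq p hp (hmem p hp 0).1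
    have h2 := hsq p hp (hmem p hp 0).2
    simp only [Set.mem_setOf_eq, Set.mem_Icc, (happ p 0 0).1, (happ p 0 0).2,
      if_pos rfl, if_true] at h1 h2
    exact ⟨by linarith [h2.1.1], by linarith [h1.1.2]⟩
  have hc1 : ∀ p ∈ P, 1 ≤ p 1 ∧ p 1 ≤ k - 1 := by
    intro p hp
    have h1 := hsq p hp (hmem p hp 1).1
    have h2 := hsq p hp (hmem p hp 1).2
    simp only [Set.mem_setOf_eq, Set.mem_Icc, (happ p 1 1).1, (happ p 1 1).2,
      if_pos rfl, if_true] at h1 h2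
    exact ⟨by linarith [h2.2.1], by linarith [h1.2.2]⟩
  have hcoord : ∀ p ∈ P, ∀ i : Fin 2, 1 ≤ p i ∧ p i ≤ k - 1 := by
    intro p hp i
    fin_cases i
    · exact hc0 p hp
    · exact hc1 p hp
  have hk2 : 2 ≤ k := by
    have := hc0 p₀ hp₀
    linarith [this.1, this.2]
  -- the grid map
  set f : EuclideanSpace ℝ (Fin 2) → ℕ × ℕ :=
    fun p => ((⌊(p 0 - 1)/s⌋).toNat, (⌊(p 1 - 1)/s⌋).toNat) with hf
  have hfloor_nonneg : ∀ p ∈ P, ∀ i : Fin 2, 0 ≤ ⌊(p i - 1)/s⌋ := by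
    intro p hp i
    have := (hcoord p hp i).1
    exact Int.floor_nonneg.2 (div_nonneg (by linarith) hspos.le)
  -- same cell implies distance ≤ 2
  have hclose : ∀ a ∈ P, ∀ b ∈ P, f a = f b → dist a b ≤ 2 := by
    intro a ha b hb hab
    have hcomp : ∀ i : Fin 2, |a i - b i| < s := by
      intro i
      have hfl : ⌊(a i - 1)/s⌋ = ⌊(b i - 1)/s⌋ := by
        have h1 := hfloor_nonneg a ha i
        have h2 := hfloor_nonneg b hb i
        have : (⌊(a i - 1)/s⌋).toNat = (⌊(b i - 1)/s⌋).toNat := by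
          fin_cases i
          · exact congrArg Prod.fst hab
          · exact congrArg Prod.snd hab
        omega
      have := Int.abs_sub_lt_one_of_floor_eq_floor hfl
      have heq : (a i - 1)/s - (b i - 1)/s = (a i - b i)/s := by ring
      rw [heq, abs_div, abs_of_pos hspos, div_lt_one hspos] at this
      exact this
    have h0 := hcomp 0
    have h1 := hcomp 1
    rw [EuclideanSpace.dist_eq, Fin.sum_univ_two]
    have : dist (a 0) (b 0) ^ 2 + dist (a 1) (b 1) ^ 2 ≤ 4 := by
      rw [Real.dist_eq, Real.dist_eq]
      nlinarith [abs_nonneg (a 0 - b 0), abs_nonneg (a 1 - b 1),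
        sq_abs (a 0 - b 0), sq_abs (a 1 - b 1)]
    calc √(dist (a 0) (b 0) ^ 2 + dist (a 1) (b 1) ^ 2) ≤ √4 := Real.sqrt_le_sqrt this
      _ = 2 := by rw [show (4:ℝ) = 2^2 by norm_num, Real.sqrt_sq (by norm_num)]
  -- each cell holds at most 2 points
  have hfiber : ∀ c ∈ P.image f, (P.filter fun p => f p = c).card ≤ 2 := by
    intro c _
    by_contra h
    push_neg at h
    obtain ⟨a, b, d, ha, hb, hd, hab, had, hbd⟩ := Finset.two_lt_card_iff.1 h
    simp only [Finset.mem_filter] at ha hb hd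
    exact htf a ha.1 b hb.1 d hd.1 hab had hbd
      ⟨hclose a ha.1 b hb.1 (ha.2.trans hb.2.symm),
       hclose a ha.1 d hd.1 (ha.2.trans hd.2.symm),
       hclose b hb.1 d hd.1 (hb.2.trans hd.2.symm)⟩
  have hcard : P.card ≤ 2 * (P.image f).card := Finset.card_le_mul_card_image P 2 hfiber
  -- bound the number of cells
  set m : ℕ := (⌊(k - 2)/s⌋).toNat + 1 with hm
  have himg : P.image f ⊆ Finset.range m ×ˢ Finset.range m := by
    intro c hc
    obtain ⟨p, hp, rfl⟩ := Finset.mem_image.1 hc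
    have hb : ∀ i : Fin 2, (⌊(p i - 1)/s⌋).toNat < m := by
      intro i
      have hle : (p i - 1)/s ≤ (k - 2)/s :=
        div_le_div_of_nonneg_right (by linarith [(hcoord p hp i).2]) hspos.le
      have : ⌊(p i - 1)/s⌋ ≤ ⌊(k - 2)/s⌋ := Int.floor_le_floor hle
      omega
    simp only [Finset.mem_product, Finset.mem_range]
    exact ⟨hb 0, hb 1⟩
  have hcells : (P.image f).card ≤ m * m := by
    calc (P.image f).card ≤ (Finset.range m ×ˢ Finset.range m).card :=
          Finset.card_le_card himg
      _ = m * m := by simp [Finset.card_product]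
  -- final arithmetic
  have hmr : (m : ℝ) ≤ (k - 2)/s + 1 := by
    have h0 : 0 ≤ ⌊(k - 2)/s⌋ := Int.floor_nonneg.2 (div_nonneg (by linarith) hspos.le)
    have h1 : (⌊(k - 2)/s⌋ : ℝ) ≤ (k - 2)/s := Int.floor_le _
    have h2 : ((⌊(k - 2)/s⌋).toNat : ℝ) = (⌊(k - 2)/s⌋ : ℝ) := by
      exact_mod_cast Int.toNat_of_nonneg h0
    push_cast [hm]
    rw [h2]; linarith
  have hPm : (P.card : ℝ) ≤ 2 * ((m:ℝ) * m) := by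
    have : (P.card : ℕ) ≤ 2 * (m * m) :=
      le_trans hcard (Nat.mul_le_mul_left 2 hcells)
    exact_mod_cast this
  have hmnn : (0:ℝ) ≤ (m:ℝ) := Nat.cast_nonneg m
  have ht : (m:ℝ) * m ≤ ((k-2)/s + 1) * ((k-2)/s + 1) := mul_self_le_mul_self hmnn hmr
  have h2m : 2 * ((m:ℝ) * m) ≤ (s * ((k-2)/s + 1))^2 := by
    have hexp : (s * ((k-2)/s + 1))^2 = s^2 * (((k-2)/s + 1) * ((k-2)/s + 1)) := by ring
    rw [hexp, hs2]; linarith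
  have hsk : s * ((k-2)/s + 1) = (k - 2) + s := by
    field_simp
  have hfin : ((k-2) + s)^2 ≤ k^2 := by nlinarith
  calc (P.card : ℝ) ≤ 2 * ((m:ℝ) * m) := hPm
    _ ≤ (s * ((k-2)/s + 1))^2 := h2m
    _ = ((k-2)+s)^2 := by rw [hsk]
    _ ≤ k^2 := hfin
end

section
/- Let (A_v)_{v ∈ V} be a finite family of arcs on the circle ℝ/ℤ and let G be its circular-arc intersection graph. If G is triangle-free (contains no three pairwise adjacent vertices), then G contains at most one cycle; precisely, any two closed walks in G that are cycles have the same edge set. -/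
/-!
In a triangle-free circular-arc graph the arcs of any cycle cover the circle: otherwise,
cutting the circle at an uncovered point turns the cycle into a cycle of a triangle-free
interval graph, where the vertex whose interval ends first has two adjacent neighbours.

Let `x` be a vertex off a cycle `C`. Each point of the arc of `x` lies on an arc of `C`,
which must belong to a neighbour of `x` (no triangles), and the arcs of `C` meeting the arc of
`x` are pairwise disjoint on it. They are closed and the arc of `x` is connected, so only one
of them meets it: `x` has at most one neighbour and lies on no cycle. Hence all cycles have the same
vertices; a chord of a cycle would close a cycle on fewer vertices, so they have the same edges.
-/

/-- The intersection graph of a family of sets `A : V → Set X`: distinct indices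
`u, v` are adjacent iff `A u ∩ A v ≠ ∅`. -/
def intersectionGraph {V X : Type*} (A : V → Set X) : SimpleGraph V where
  Adj u v := u ≠ v ∧ (A u ∩ A v).Nonempty
  symm := by
    refine ⟨?_⟩
    rintro u v ⟨hne, x, hx1, hx2⟩
    exact ⟨hne.symm, x, hx2, hx1⟩
  loopless := by
    refine ⟨?_⟩
    rintro u ⟨hne, -⟩
    exact hne rfl

/-- The arc on the circle `ℝ/ℤ` obtained by projecting the closed real interval `[a, b]`. -/
def arc (a b : ℝ) : Set (AddCircle (1 : ℝ)) :=
  (fun x : ℝ => (x : AddCircle (1 : ℝ))) '' Set.Icc a b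

open Set SimpleGraph

namespace SimpleGraph.Walk

variable {V : Type*} {G : SimpleGraph V} [DecidableEq V]

lemma IsCycle.exists_adj_adj_ne {u x : V} {c : G.Walk u u} (hc : c.IsCycle)
    (hx : x ∈ c.support) :
    ∃ y z, y ≠ z ∧ G.Adj x y ∧ G.Adj x z ∧ y ∈ c.support ∧ z ∈ c.support := by
  have hc' := hc.rotate hx
  refine ⟨_, _, hc'.snd_ne_penultimate, adj_snd hc'.not_nil,
    (adj_penultimate hc'.not_nil).symm, ?_, ?_⟩ <;>
    exact (mem_support_rotate_iff c x hx).mp (getVert_mem_support _ _)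

lemma IsCycle.exists_isCycle_notMem_support_of_adj {v u w : V} {c : G.Walk v v}
    (hc : c.IsCycle) (hu : u ∈ c.support) (hw : w ∈ c.support) (huw : G.Adj u w)
    (he : s(u, w) ∉ c.edges) :
    ∃ (c' : G.Walk u u) (y : V), c'.IsCycle ∧ y ∈ c.support ∧ y ∉ c'.support := by
  obtain ⟨y, huy, q, hcq⟩ := not_nil_iff.mp (hc.rotate hu).not_nil
  have hcycle : (cons huy q).IsCycle := hcq ▸ hc.rotate hu
  have hedges : ∀ e, e ∈ (cons huy q).edges → e ∈ c.edges := fun e he' =>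
    (rotate_edges c u hu).mem_iff.mp (hcq ▸ he')
  have hsupp : ∀ x, x ∈ (cons huy q).support → x ∈ c.support := fun x hx =>
    (mem_support_rotate_iff c u hu).mp (hcq ▸ hx)
  rw [cons_isCycle_iff] at hcycle
  have hwq : w ∈ q.support := by
    have := (mem_support_rotate_iff c u hu).mpr hw
    rw [hcq, support_cons] at this
    exact (List.mem_cons.mp this).resolve_left huw.ne'
  have hyw : y ≠ w := by
    rintro rfl
    exact he (hedges _ (by simp))
  refine ⟨cons huw (q.dropUntil w hwq), y, ?_, hsupp y (by simp), ?_⟩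
  · rw [cons_isCycle_iff]
    exact ⟨hcycle.1.dropUntil hwq,
      fun h => he (hedges _ (List.mem_cons_of_mem _ (q.edges_dropUntil_subset_edges hwq h)))⟩
  · have hpath : ((q.takeUntil w hwq).append (q.dropUntil w hwq)).IsPath :=
      (q.take_spec hwq).symm ▸ hcycle.1
    rw [support_cons, List.mem_cons, not_or]
    exact ⟨huy.ne', fun h => hpath.ne_of_mem_support_of_append hyw (start_mem_support _) h rfl⟩

lemma IsCycle.edges_subset_of_forall_support_subset
    (hsupp : ∀ (u v : V) (c : G.Walk u u) (c' : G.Walk v v),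
      c.IsCycle → c'.IsCycle → c.support ⊆ c'.support)
    {u v : V} {c : G.Walk u u} {c' : G.Walk v v} (hc : c.IsCycle) (hc' : c'.IsCycle) :
    c.edges ⊆ c'.edges := by
  intro e he
  induction e using Sym2.ind with | _ x y => ?_
  by_contra hne
  have hx := hsupp _ _ c c' hc hc' (c.fst_mem_support_of_mem_edges he)
  have hy := hsupp _ _ c c' hc hc' (c.snd_mem_support_of_mem_edges he)
  obtain ⟨c'', z, hc'', hz, hz''⟩ :=
    hc'.exists_isCycle_notMem_support_of_adj hx hy (c.adj_of_mem_edges he) hne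
  exact hz'' (hsupp _ _ c' c'' hc' hc'' hz)

end SimpleGraph.Walk

namespace intersectionGraph

variable {V X : Type*} {A : V → Set X}

lemma eq_or_eq_or_eq_of_mem (htf : (intersectionGraph A).CliqueFree 3) {p : X} {u v w : V}
    (hu : p ∈ A u) (hv : p ∈ A v) (hw : p ∈ A w) : u = v ∨ u = w ∨ v = w := by
  classical
  by_contra! h
  exact htf {u, v, w} (is3Clique_triple_iff.mpr
    ⟨⟨h.1, p, hu, hv⟩, ⟨h.2.1, p, hu, hw⟩, ⟨h.2.2, p, hv, hw⟩⟩)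

lemma mem_of_adj_of_subset_biUnion (htf : (intersectionGraph A).CliqueFree 3) {U : Set V}
    {x w : V} (hcover : A x ⊆ ⋃ v ∈ U, A v) (hxU : x ∉ U) (hxw : (intersectionGraph A).Adj x w) :
    w ∈ U := by
  obtain ⟨hne, p, hpx, hpw⟩ := hxw
  obtain ⟨v, hv, hpv⟩ := mem_iUnion₂.mp (hcover hpx)
  obtain h | h | h := eq_or_eq_or_eq_of_mem htf hpx hpw hpv
  · exact absurd h hne
  · exact absurd (h ▸ hv) hxU
  · exact h ▸ hv

lemma eq_of_adj_of_adj_of_subset_biUnion [TopologicalSpace X] (hA : ∀ v, IsClosed (A v))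
    (htf : (intersectionGraph A).CliqueFree 3) {U : Set V} (hU : U.Finite) {x y z : V}
    (hx : IsPreconnected (A x)) (hcover : A x ⊆ ⋃ v ∈ U, A v) (hxU : x ∉ U)
    (hz : z ∈ U) (hxy : (intersectionGraph A).Adj x y)
    (hxz : (intersectionGraph A).Adj x z) : y = z := by
  by_contra hyz
  have hdisj : ∀ p ∈ A x, p ∈ A y → ∀ v ∈ U \ {y}, p ∉ A v := by
    intro p hpx hpy v hv hpv
    obtain h | h | h := eq_or_eq_or_eq_of_mem htf hpx hpy hpv
    · exact hxy.ne h
    · exact hxU (h ▸ hv.1)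
    · exact hv.2 h.symm
  have hsplit : A x ⊆ A y ∪ ⋃ v ∈ U \ {y}, A v := by
    intro p hp
    obtain ⟨v, hv, hpv⟩ := mem_iUnion₂.mp (hcover hp)
    by_cases hvy : v = y
    · exact Or.inl (hvy ▸ hpv)
    · exact Or.inr (mem_iUnion₂.mpr ⟨v, ⟨hv, hvy⟩, hpv⟩)
  obtain hsub | hsub := isPreconnected_iff_subset_of_disjoint_closed.mp hx _ _ (hA y)
    (hU.sdiff.isClosed_biUnion fun v _ => hA v) hsplit
    (eq_empty_of_forall_notMem fun p ⟨hpx, hpy, hpD⟩ =>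
      let ⟨v, hv, hpv⟩ := mem_iUnion₂.mp hpD
      hdisj p hpx hpy v hv hpv)
  · obtain ⟨q, hqx, hqz⟩ := hxz.2
    exact hdisj q hqx (hsub hqx) z ⟨hz, Ne.symm hyz⟩ hqz
  · obtain ⟨p, hpx, hpy⟩ := hxy.2
    obtain ⟨v, hv, hpv⟩ := mem_iUnion₂.mp (hsub hpx)
    exact hdisj p hpx hpy v hv hpv

lemma support_subset_of_isCycle [TopologicalSpace X] [DecidableEq V]
    (hA : ∀ v, IsClosed (A v)) (hconn : ∀ v, IsPreconnected (A v))
    (htf : (intersectionGraph A).CliqueFree 3)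
    (hcover : ∀ (u : V) (c : (intersectionGraph A).Walk u u), c.IsCycle →
      ∀ p, ∃ v ∈ c.support, p ∈ A v)
    (u v : V) (c : (intersectionGraph A).Walk u u) (c' : (intersectionGraph A).Walk v v)
    (hc : c.IsCycle) (hc' : c'.IsCycle) : c.support ⊆ c'.support := by
  intro x hx
  by_contra hx'
  have hcover' : A x ⊆ ⋃ w ∈ {w | w ∈ c'.support}, A w := fun p _ =>
    let ⟨w, hw, hpw⟩ := hcover v c' hc' p
    mem_iUnion₂.mpr ⟨w, hw, hpw⟩
  obtain ⟨y, z, hyz, hxy, hxz, -, -⟩ := hc.exists_adj_adj_ne hx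
  exact hyz (eq_of_adj_of_adj_of_subset_biUnion hA htf c'.support.finite_toSet (hconn x) hcover'
    hx' (mem_of_adj_of_subset_biUnion htf hcover' hx' hxz) hxy hxz)

theorem isAcyclic_Icc {α : Type*} [LinearOrder α] (l r : V → α)
    (htf : (intersectionGraph fun v => Icc (l v) (r v)).CliqueFree 3) :
    (intersectionGraph fun v => Icc (l v) (r v)).IsAcyclic := by
  classical
  intro u c hc
  obtain ⟨v, hv, hmin⟩ := c.support.toFinset.exists_min_image r ⟨u, by simp⟩
  rw [List.mem_toFinset] at hv
  have hend : ∀ w, (intersectionGraph fun v => Icc (l v) (r v)).Adj v w → w ∈ c.support →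
      r v ∈ Icc (l w) (r w) := fun w ⟨_, s, hsv, hsw⟩ hw =>
    ⟨hsw.1.trans hsv.2, hmin w (List.mem_toFinset.mpr hw)⟩
  obtain ⟨y, z, hyz, hvy, hvz, hy, hz⟩ := hc.exists_adj_adj_ne hv
  exact htf {v, y, z} (is3Clique_triple_iff.mpr
    ⟨hvy, hvz, hyz, r v, hend y hvy hy, hend z hvz hz⟩)

end intersectionGraph

lemma arc_add_intCast (a b : ℝ) (n : ℤ) : arc (a + n) (b + n) = arc a b := by
  rw [arc, arc, ← image_add_const_Icc, image_image]
  simp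

lemma isClosed_arc (a b : ℝ) : IsClosed (arc a b) :=
  (isCompact_Icc.image (AddCircle.continuous_mk' 1)).isClosed

lemma isPreconnected_arc (a b : ℝ) : IsPreconnected (arc a b) :=
  isPreconnected_Icc.image _ (AddCircle.continuous_mk' 1).continuousOn

lemma exists_Icc_add_intCast_subset_Ioo {a b c : ℝ} (hc : (c : AddCircle (1 : ℝ)) ∉ arc a b) :
    ∃ n : ℤ, Icc (a + n) (b + n) ⊆ Ioo c (c + 1) := by
  refine ⟨⌈c - a⌉, fun t ht => ⟨?_, ?_⟩⟩
  · refine lt_of_le_of_ne (by linarith [Int.le_ceil (c - a), ht.1]) fun hct => hc ?_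
    rw [← arc_add_intCast a b ⌈c - a⌉]
    exact ⟨t, ht, by rw [hct]⟩
  · by_contra! htc
    rw [← arc_add_intCast a b ⌈c - a⌉] at hc
    refine hc ⟨c + 1, ⟨?_, ht.2.trans' htc⟩, AddCircle.coe_add_period 1 c⟩
    linarith [Int.ceil_lt_add_one (c - a)]

lemma nonempty_Icc_inter_Icc_of_arc {a b a' b' c : ℝ} (h : Icc a b ⊆ Ioo c (c + 1))
    (h' : Icc a' b' ⊆ Ioo c (c + 1)) (hne : (arc a b ∩ arc a' b').Nonempty) :
    (Icc a b ∩ Icc a' b').Nonempty := by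
  obtain ⟨-, ⟨s, hs, rfl⟩, t, ht, hst⟩ := hne
  have := (AddCircle.coe_eq_coe_iff_of_mem_Ico (Ioo_subset_Ico_self (h hs))
    (Ioo_subset_Ico_self (h' ht))).mp hst.symm
  exact ⟨s, hs, this ▸ ht⟩

theorem exists_mem_arc_of_isCycle {V : Type*} (a b : V → ℝ)
    (htf : (intersectionGraph fun v => arc (a v) (b v)).CliqueFree 3) {u : V}
    (c : (intersectionGraph fun v => arc (a v) (b v)).Walk u u) (hc : c.IsCycle)
    (p : AddCircle (1 : ℝ)) : ∃ v ∈ c.support, p ∈ arc (a v) (b v) := by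
  by_contra! hp
  obtain ⟨x, rfl⟩ := QuotientAddGroup.mk_surjective p
  -- Vertices off the cycle get an empty interval, so the interval graph is a subgraph.
  have hlift : ∀ v, ∃ l r : ℝ,
      (v ∈ c.support → arc (a v) (b v) = arc l r ∧ Icc l r ⊆ Ioo x (x + 1)) ∧
      (v ∉ c.support → r < l) := by
    intro v
    by_cases hv : v ∈ c.support
    · obtain ⟨n, hn⟩ := exists_Icc_add_intCast_subset_Ioo (hp v hv)
      exact ⟨a v + n, b v + n, fun _ => ⟨(arc_add_intCast _ _ n).symm, hn⟩, absurd hv⟩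
    · exact ⟨1, 0, (absurd · hv), fun _ => zero_lt_one⟩
  choose l r hlr using hlift
  have hle : (intersectionGraph fun v => Icc (l v) (r v)) ≤
      intersectionGraph fun v => arc (a v) (b v) := by
    have hmem : ∀ {v s}, s ∈ Icc (l v) (r v) → (s : AddCircle (1 : ℝ)) ∈ arc (a v) (b v) := by
      intro v s hs
      have hv : v ∈ c.support := by_contra fun hv => (hs.1.trans hs.2).not_gt ((hlr v).2 hv)
      exact ((hlr v).1 hv).1 ▸ ⟨s, hs, rfl⟩
    rintro v w ⟨hvw, s, hsv, hsw⟩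
    exact ⟨hvw, s, hmem hsv, hmem hsw⟩
  have hedges : ∀ e ∈ c.edges, e ∈ (intersectionGraph fun v => Icc (l v) (r v)).edgeSet := by
    intro e he
    induction e using Sym2.ind with | _ v w => ?_
    obtain ⟨hvw, hne⟩ : v ≠ w ∧ (arc (a v) (b v) ∩ arc (a w) (b w)).Nonempty :=
      c.adj_of_mem_edges he
    obtain ⟨harcv, hv⟩ := (hlr v).1 (c.fst_mem_support_of_mem_edges he)
    obtain ⟨harcw, hw⟩ := (hlr w).1 (c.snd_mem_support_of_mem_edges he)
    rw [harcv, harcw] at hne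
    exact ⟨hvw, nonempty_Icc_inter_Icc_of_arc hv hw hne⟩
  exact intersectionGraph.isAcyclic_Icc l r (htf.anti hle) _ (hc.transfer hedges)

theorem stmt4_general {V : Type*} (a b : V → ℝ)
    (htf : (intersectionGraph fun v => arc (a v) (b v)).CliqueFree 3) :
    ∀ (x y : V) (W₁ : (intersectionGraph fun v => arc (a v) (b v)).Walk x x)
      (W₂ : (intersectionGraph fun v => arc (a v) (b v)).Walk y y),
      W₁.IsCycle → W₂.IsCycle → {e | e ∈ W₁.edges} = {e | e ∈ W₂.edges} := by
  classical
  intro x y W₁ W₂ h₁ h₂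
  have hsupp := intersectionGraph.support_subset_of_isCycle
    (fun v => isClosed_arc (a v) (b v)) (fun v => isPreconnected_arc (a v) (b v)) htf
    (fun _ c hc => exists_mem_arc_of_isCycle a b htf c hc)
  exact Set.ext fun e => ⟨fun he => h₁.edges_subset_of_forall_support_subset hsupp h₂ he,
    fun he => h₂.edges_subset_of_forall_support_subset hsupp h₁ he⟩

theorem stmt4 {V : Type*} [Fintype V] (a b : V → ℝ) (hab : ∀ v, a v ≤ b v)
    (htf : (intersectionGraph fun v => arc (a v) (b v)).CliqueFree 3) :
    ∀ (x y : V) (W₁ : (intersectionGraph fun v => arc (a v) (b v)).Walk x x)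
      (W₂ : (intersectionGraph fun v => arc (a v) (b v)).Walk y y),
      W₁.IsCycle → W₂.IsCycle → {e | e ∈ W₁.edges} = {e | e ∈ W₂.edges} :=
  stmt4_general a b htf
end

section
/- Let a, b, c be points in ℝ² whose y-coordinates all lie in the interval [0,1], and suppose their x-coordinates satisfy x(a) ≤ x(b) ≤ x(c). If the Euclidean distances satisfy dist(a,b) > 2 and dist(b,c) > 2, then dist(a,c) > 2. (Equivalently: if the unit disks centered at a and b are disjoint and the unit disks centered at b and c are disjoint, then the unit disks centered at a and c are disjoint.) -/
theorem stmt8 (a b c : EuclideanSpace ℝ (Fin 2))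
    (hya : a 1 ∈ Set.Icc (0 : ℝ) 1) (hyb : b 1 ∈ Set.Icc (0 : ℝ) 1)
    (hyc : c 1 ∈ Set.Icc (0 : ℝ) 1)
    (hxab : a 0 ≤ b 0) (hxbc : b 0 ≤ c 0)
    (hab : 2 < dist a b) (hbc : 2 < dist b c) :
    2 < dist a c := by
  obtain ⟨ha0, ha1⟩ := hya
  obtain ⟨hb0, hb1⟩ := hyb
  obtain ⟨hc0, hc1⟩ := hyc
  simp only [EuclideanSpace.dist_eq, Fin.sum_univ_two, Real.dist_eq, sq_abs] at *
  rw [show ((2:ℝ) = Real.sqrt 4) by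
        rw [show (4:ℝ) = 2^2 by norm_num, Real.sqrt_sq (by norm_num)]] at hab hbc ⊢
  rw [Real.sqrt_lt_sqrt_iff (by norm_num)] at hab hbc ⊢
  have h1 : 3 < (b 0 - a 0)^2 := by nlinarith [sq_nonneg (a 1 - b 1)]
  have h2 : 3 < (c 0 - b 0)^2 := by nlinarith [sq_nonneg (b 1 - c 1)]
  have h3 : Real.sqrt 3 < b 0 - a 0 := by
    nlinarith [Real.sq_sqrt (show (0:ℝ) ≤ 3 by norm_num), Real.sqrt_nonneg 3, sq_nonneg (b 0 - a 0 - Real.sqrt 3)]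
  have h4 : Real.sqrt 3 < c 0 - b 0 := by
    nlinarith [Real.sq_sqrt (show (0:ℝ) ≤ 3 by norm_num), Real.sqrt_nonneg 3,
      sq_nonneg (c 0 - b 0 - Real.sqrt 3)]
  have hs : (1:ℝ) < Real.sqrt 3 := by
    nlinarith [Real.sq_sqrt (show (0:ℝ) ≤ 3 by norm_num), Real.sqrt_nonneg 3]
  nlinarith [sq_nonneg (c 1 - a 1), Real.sq_sqrt (show (0:ℝ) ≤ 3 by norm_num)]
end

section
/- Let k ≥ 5 be a natural number and let v : ℤ/kℤ → ℝ² be an injective map such that every point v(i) has y-coordinate in [0,1] and dist(v(i), v(i+1)) ≤ 2 for all i ∈ ℤ/kℤ (so v traces a cycle in the unit-disk intersection graph). Then there exist indices i, j ∈ ℤ/kℤ with j ∉ {i−1, i, i+1} such that dist(v(i), v(j)) ≤ 2. In other words, the unit-disk intersection graph of a finite set of points in ℝ × [0,1] (with centers adjacent iff their distance is at most 2) contains no induced (chordless) cycle of length 5 or more. -/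
lemma dle2 (p q : EuclideanSpace ℝ (Fin 2)) :
    dist p q ≤ 2 ↔ (p 0 - q 0)^2 + (p 1 - q 1)^2 ≤ 4 := by
  rw [EuclideanSpace.dist_eq, Fin.sum_univ_two, Real.dist_eq, Real.dist_eq, sq_abs, sq_abs]
  constructor
  · intro h
    have h0 : (0:ℝ) ≤ (p 0 - q 0)^2 + (p 1 - q 1)^2 := by positivity
    nlinarith [Real.sq_sqrt h0, Real.sqrt_nonneg ((p 0 - q 0)^2 + (p 1 - q 1)^2)]
  · intro h
    have h2 := Real.sqrt_le_sqrt h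
    rwa [show (4:ℝ) = 2^2 by norm_num, Real.sqrt_sq (by norm_num : (0:ℝ) ≤ 2)] at h2

lemma mid (p q r : EuclideanSpace ℝ (Fin 2))
    (hp : p 1 ∈ Set.Icc (0:ℝ) 1) (hq : q 1 ∈ Set.Icc (0:ℝ) 1) (hr : r 1 ∈ Set.Icc (0:ℝ) 1)
    (h1 : p 0 ≤ q 0) (h2 : q 0 ≤ r 0) (h : dist p r ≤ 2) :
    dist p q ≤ 2 ∨ dist q r ≤ 2 := by
  obtain ⟨hp0, hp1⟩ := hp; obtain ⟨hq0, hq1⟩ := hq; obtain ⟨hr0, hr1⟩ := hr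
  rw [dle2] at h
  rcases le_or_gt (q 0 - p 0) 1 with hc | hc
  · left; rw [dle2]; nlinarith
  · right; rw [dle2]; nlinarith [sq_nonneg (p 1 - r 1), sq_nonneg (q 1 - r 1)]

theorem stmt9 (k : ℕ) (hk : 5 ≤ k) (v : ZMod k → EuclideanSpace ℝ (Fin 2))
    (hinj : Function.Injective v)
    (hy : ∀ i, v i 1 ∈ Set.Icc (0 : ℝ) 1)
    (hadj : ∀ i, dist (v i) (v (i + 1)) ≤ 2) :
    ∃ i j : ZMod k, j ≠ i - 1 ∧ j ≠ i ∧ j ≠ i + 1 ∧ dist (v i) (v j) ≤ 2 := by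
  haveI : NeZero k := ⟨by omega⟩
  by_contra hcon
  push_neg at hcon
  have hnen : ∀ n : ℕ, 0 < n → n < k → ((n : ZMod k) ≠ 0) := by
    intro n hn hnk h
    rw [ZMod.natCast_eq_zero_iff] at h
    exact absurd (Nat.le_of_dvd hn h) (by omega)
  have hne1 : (1 : ZMod k) ≠ 0 := by exact_mod_cast hnen 1 (by norm_num) (by omega)
  have hne2 : (2 : ZMod k) ≠ 0 := by exact_mod_cast hnen 2 (by norm_num) (by omega)
  have hne3 : (3 : ZMod k) ≠ 0 := by exact_mod_cast hnen 3 (by norm_num) (by omega)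
  have hne4 : (4 : ZMod k) ≠ 0 := by exact_mod_cast hnen 4 (by norm_num) (by omega)
  obtain ⟨i, -, hmin⟩ := Finset.exists_min_image (Finset.univ : Finset (ZMod k))
    (fun j => v j 0) ⟨0, Finset.mem_univ 0⟩
  have n1 : 2 < dist (v (i+1)) (v (i-1)) := by
    refine hcon (i+1) (i-1) ?_ ?_ ?_
    · intro h; exact hne1 (by first | linear_combination h | linear_combination -h)
    · intro h; exact hne2 (by first | linear_combination h | linear_combination -h)
    · intro h; exact hne3 (by first | linear_combination h | linear_combination -h)
  have n2 : 2 < dist (v i) (v (i-2)) := by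
    refine hcon i (i-2) ?_ ?_ ?_
    · intro h; exact hne1 (by first | linear_combination h | linear_combination -h)
    · intro h; exact hne2 (by first | linear_combination h | linear_combination -h)
    · intro h; exact hne3 (by first | linear_combination h | linear_combination -h)
  have n2' : 2 < dist (v i) (v (i+2)) := by
    refine hcon i (i+2) ?_ ?_ ?_
    · intro h; exact hne3 (by first | linear_combination h | linear_combination -h)
    · intro h; exact hne2 (by first | linear_combination h | linear_combination -h)
    · intro h; exact hne1 (by first | linear_combination h | linear_combination -h)
  have n3 : 2 < dist (v (i+1)) (v (i-2)) := by
    refine hcon (i+1) (i-2) ?_ ?_ ?_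
    · intro h; exact hne2 (by first | linear_combination h | linear_combination -h)
    · intro h; exact hne3 (by first | linear_combination h | linear_combination -h)
    · intro h; exact hne4 (by first | linear_combination h | linear_combination -h)
  have n3' : 2 < dist (v (i-1)) (v (i+2)) := by
    refine hcon (i-1) (i+2) ?_ ?_ ?_
    · intro h; exact hne4 (by first | linear_combination h | linear_combination -h)
    · intro h; exact hne3 (by first | linear_combination h | linear_combination -h)
    · intro h; exact hne2 (by first | linear_combination h | linear_combination -h)
  have e1 : dist (v i) (v (i+1)) ≤ 2 := hadj i
  have e2 : dist (v (i+1)) (v (i+2)) ≤ 2 := by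
    have := hadj (i+1); rwa [show i + 1 + 1 = i + 2 from by ring] at this
  have e0 : dist (v (i-1)) (v i) ≤ 2 := by
    have := hadj (i-1); rwa [show i - 1 + 1 = i from by ring] at this
  have em2 : dist (v (i-2)) (v (i-1)) ≤ 2 := by
    have := hadj (i-2); rwa [show i - 2 + 1 = i - 1 from by ring] at this
  rcases le_total (v (i-1) 0) (v (i+1) 0) with hac | hca
  · rcases le_total (v (i-2) 0) (v (i+1) 0) with h1 | h1
    · rcases mid (v i) (v (i-2)) (v (i+1)) (hy _) (hy _) (hy _)
        (hmin _ (Finset.mem_univ _)) h1 e1 with h | h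
      · exact absurd h (not_le.2 n2)
      · rw [dist_comm] at h; exact absurd h (not_le.2 n3)
    · rcases mid (v (i-1)) (v (i+1)) (v (i-2)) (hy _) (hy _) (hy _)
        hac h1 (by rwa [dist_comm] at em2) with h | h
      · rw [dist_comm] at h; exact absurd h (not_le.2 n1)
      · exact absurd h (not_le.2 n3)
  · rcases le_total (v (i+2) 0) (v (i-1) 0) with h1 | h1
    · rcases mid (v i) (v (i+2)) (v (i-1)) (hy _) (hy _) (hy _)
        (hmin _ (Finset.mem_univ _)) h1 (by rwa [dist_comm] at e0) with h | h
      · exact absurd h (not_le.2 n2')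
      · rw [dist_comm] at h; exact absurd h (not_le.2 n3')
    · rcases mid (v (i+1)) (v (i-1)) (v (i+2)) (hy _) (hy _) (hy _)
        hca h1 e2 with h | h
      · exact absurd h (not_le.2 n1)
      · exact absurd h (not_le.2 n3')
end

section
/- Let P be a finite set of points in ℝ² whose y-coordinates all lie in [0,1], and let G be the unit-disk intersection graph on P (distinct points adjacent iff their Euclidean distance is at most 2). If G is triangle-free (no three pairwise adjacent vertices), then G is bipartite (2-colorable). The same holds for every induced subgraph: any subset S ⊆ P inducing a triangle-free subgraph induces a bipartite subgraph. -/
/-!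
Order the points of the strip `0 ≤ y ≤ 1` by `p ≺ q` iff `p` lies to the left of `q` and the two
are not adjacent. Non-adjacent points of the strip are more than `√3 > 1` apart horizontally, so
`≺` is transitive, and the unit-disk graph is exactly the incomparability graph of `≺`. A triangle
is then a three-element antichain, so a triangle-free graph comes from a poset of width at most
two; such a poset is covered by two chains (Dilworth), and chains are independent sets.
-/

/-- The unit-disk intersection graph on points of the plane: distinct points are
adjacent iff their Euclidean distance is at most 2. -/
def unitDiskGraph : SimpleGraph (EuclideanSpace ℝ (Fin 2)) where
  Adj p q := p ≠ q ∧ dist p q ≤ 2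
  symm := by
    refine ⟨?_⟩
    rintro p q ⟨hne, hd⟩
    exact ⟨hne.symm, by rwa [dist_comm]⟩
  loopless := by
    refine ⟨?_⟩
    rintro p ⟨hne, -⟩
    exact hne rfl

namespace SimpleGraph

variable {α : Type*} [PartialOrder α] {G : SimpleGraph α}

theorem isChain_setOf_incompRel (hG : ∀ x y, G.Adj x y ↔ IncompRel (· ≤ ·) x y)
    (h3 : G.CliqueFree 3) (m : α) : IsChain (· ≤ ·) {x | IncompRel (· ≤ ·) m x} := by
  classical
  intro x hx y hy _
  by_contra hcomp
  exact h3 {m, x, y} (is3Clique_triple_iff.2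
    ⟨(hG m x).2 hx, (hG m y).2 hy, (hG x y).2 (not_or.1 hcomp)⟩)

theorem exists_coloring_of_coloring_sdiff_upperChain
    (hG : ∀ x y, G.Adj x y ↔ IncompRel (· ≤ ·) x y) {s V : Finset α}
    (hV : IsChain (· ≤ ·) (V : Set α)) (hVup : ∀ x ∈ V, ∀ y ∈ s, x ≤ y → y ∈ V)
    {m : α} (hmV : m ∈ V) (hm : ∀ x ∈ V, m ≤ x) {c : α → Bool}
    (hcm : ∀ y ∈ s, y ∉ V → IncompRel (· ≤ ·) m y → c y = true)
    (hc : ∀ x ∈ s, ∀ y ∈ s, x ∉ V → y ∉ V → G.Adj x y → c x ≠ c y) :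
    ∃ c' : α → Bool, (∀ x ∈ V, c' x = true) ∧ ∀ x ∈ s, ∀ y ∈ s, G.Adj x y → c' x ≠ c' y := by
  classical
  have hcross : ∀ x ∈ V, ∀ y ∈ s, y ∉ V → G.Adj x y → c y = true :=
    fun x hx y hy hyV hxy => hcm y hy hyV
      ⟨fun hmy => hyV (hVup m hmV y hy hmy), fun hym => ((hG x y).1 hxy).2 (hym.trans (hm x hx))⟩
  refine ⟨fun x => if x ∈ V then true else !c x, fun x hx => if_pos hx, fun x hx y hy hxy => ?_⟩
  by_cases hxV : x ∈ V <;> by_cases hyV : y ∈ V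
  · exact absurd (hV.total hxV hyV) (by simpa [IncompRel, not_or] using (hG x y).1 hxy)
  · simp [hxV, hyV, hcross x hxV y hy hyV hxy]
  · simp [hxV, hyV, hcross y hyV x hx hxV hxy.symm]
  · simpa [hxV, hyV] using hc x hx y hy hxV hyV hxy

/-- Dilworth's theorem for width two, strengthened so that it can be proved by induction: after
removing an upper chain `U` with least element `m`, the elements incomparable to `m` form an upper
chain of what remains. -/
theorem exists_coloring_eq_true_on_upperChain (hG : ∀ x y, G.Adj x y ↔ IncompRel (· ≤ ·) x y)
    (h3 : G.CliqueFree 3) (s U : Finset α) (hUs : U ⊆ s) (hU : IsChain (· ≤ ·) (U : Set α))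
    (hUup : ∀ x ∈ U, ∀ y ∈ s, x ≤ y → y ∈ U) :
    ∃ c : α → Bool, (∀ x ∈ U, c x = true) ∧ ∀ x ∈ s, ∀ y ∈ s, G.Adj x y → c x ≠ c y := by
  classical
  induction s using Finset.strongInduction generalizing U with
  | H s ih =>
  have step : ∀ V ⊆ s, IsChain (· ≤ ·) (V : Set α) → (∀ x ∈ V, ∀ y ∈ s, x ≤ y → y ∈ V) →
      ∀ m ∈ V, (∀ x ∈ V, m ≤ x) →
      ∃ c : α → Bool, (∀ x ∈ V, c x = true) ∧ ∀ x ∈ s, ∀ y ∈ s, G.Adj x y → c x ≠ c y := by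
    intro V hVs hV hVup m hmV hm
    obtain ⟨c, hcm, hc⟩ := ih (s \ V) (Finset.sdiff_ssubset hVs ⟨m, hmV⟩)
      ((s \ V).filter (IncompRel (· ≤ ·) m)) (Finset.filter_subset _ _)
      ((isChain_setOf_incompRel hG h3 m).mono fun x hx => (Finset.mem_filter.1 hx).2)
      (fun x hx y hy hxy => Finset.mem_filter.2 ⟨hy,
        fun hmy => (Finset.mem_sdiff.1 hy).2 (hVup m hmV y (Finset.mem_sdiff.1 hy).1 hmy),
        fun hym => (Finset.mem_filter.1 hx).2.2 (hxy.trans hym)⟩)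
    exact exists_coloring_of_coloring_sdiff_upperChain hG hV hVup hmV hm
      (fun y hy hyV hmy => hcm y (by simp [hy, hyV, hmy]))
      (fun x hx y hy hxV hyV => hc x (by simp [hx, hxV]) y (by simp [hy, hyV]))
  rcases U.eq_empty_or_nonempty with rfl | hU0
  · rcases s.eq_empty_or_nonempty with rfl | hs
    · exact ⟨fun _ => true, by simp⟩
    obtain ⟨a, has, ha⟩ := s.exists_maximal hs
    obtain ⟨c, -, hc⟩ := step {a} (by simpa using has) (by simp)
      (fun x hx y hy hxy => by
        rw [Finset.mem_singleton] at hx ⊢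
        subst hx
        exact le_antisymm (ha hy hxy) hxy) a (by simp) (by simp)
    exact ⟨c, by simp, hc⟩
  · obtain ⟨m, hmU, hmin⟩ := U.exists_minimal hU0
    exact step U hUs hU hUup m hmU fun x hx => (hU.total hx hmU).elim (hmin hx) id

theorem colorable_two_of_adj_iff_incompRel [Finite α]
    (hG : ∀ x y, G.Adj x y ↔ IncompRel (· ≤ ·) x y) (h3 : G.CliqueFree 3) : G.Colorable 2 := by
  have := Fintype.ofFinite α
  obtain ⟨c, -, hc⟩ := exists_coloring_eq_true_on_upperChain hG h3 Finset.univ ∅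
    (Finset.empty_subset _) (by simp) (by simp)
  exact (Coloring.mk c fun h => hc _ (Finset.mem_univ _) _ (Finset.mem_univ _) h).colorable

end SimpleGraph

open Set

namespace UnitDiskStrip

local notation "ℝ²" => EuclideanSpace ℝ (Fin 2)

theorem dist_sq_eq (p q : ℝ²) : dist p q ^ 2 = (p 0 - q 0) ^ 2 + (p 1 - q 1) ^ 2 := by
  rw [EuclideanSpace.dist_eq, Real.sq_sqrt (by positivity), Fin.sum_univ_two, Real.dist_eq,
    Real.dist_eq, sq_abs, sq_abs]

theorem one_lt_abs_sub_of_two_lt_dist {p q : ℝ²} (hp : p 1 ∈ Icc (0 : ℝ) 1)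
    (hq : q 1 ∈ Icc (0 : ℝ) 1) (h : 2 < dist p q) : 1 < |p 0 - q 0| := by
  rw [← one_lt_sq_iff_one_lt_abs]
  have h4 : 2 ^ 2 < dist p q ^ 2 := pow_lt_pow_left₀ h zero_le_two two_ne_zero
  nlinarith [dist_sq_eq p q, hp.1, hp.2, hq.1, hq.2]

def FarLeftOf (p q : ℝ²) : Prop := p 0 < q 0 ∧ 2 < dist p q

theorem FarLeftOf.trans {p q r : ℝ²} (hp : p 1 ∈ Icc (0 : ℝ) 1) (hq : q 1 ∈ Icc (0 : ℝ) 1)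
    (hr : r 1 ∈ Icc (0 : ℝ) 1) (hpq : FarLeftOf p q) (hqr : FarLeftOf q r) : FarLeftOf p r := by
  have h₁ := one_lt_abs_sub_of_two_lt_dist hp hq hpq.2
  have h₂ := one_lt_abs_sub_of_two_lt_dist hq hr hqr.2
  rw [abs_sub_comm, abs_of_pos (sub_pos.2 hpq.1)] at h₁
  rw [abs_sub_comm, abs_of_pos (sub_pos.2 hqr.1)] at h₂
  refine ⟨hpq.1.trans hqr.1, ?_⟩
  calc (2 : ℝ) < r 0 - p 0 := by linarith
    _ ≤ |r 0 - p 0| := le_abs_self _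
    _ = dist (r 0) (p 0) := (Real.dist_eq _ _).symm
    _ ≤ dist p r := by rw [dist_comm]; exact PiLp.dist_apply_le _ _ _

theorem dist_le_two_iff {p q : ℝ²} (hp : p 1 ∈ Icc (0 : ℝ) 1) (hq : q 1 ∈ Icc (0 : ℝ) 1) :
    dist p q ≤ 2 ↔ ¬ FarLeftOf p q ∧ ¬ FarLeftOf q p := by
  refine ⟨fun h => ⟨fun hpq => h.not_gt hpq.2, fun hqp => h.not_gt (dist_comm p q ▸ hqp.2)⟩, ?_⟩
  rintro ⟨hpq, hqp⟩
  by_contra! h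
  have hne : p 0 ≠ q 0 := fun heq => by
    have := one_lt_abs_sub_of_two_lt_dist hp hq h
    norm_num [heq] at this
  rcases hne.lt_or_gt with hlt | hgt
  · exact hpq ⟨hlt, h⟩
  · exact hqp ⟨hgt, dist_comm p q ▸ h⟩

theorem colorable_two_induce_of_cliqueFree {S : Set ℝ²} (hfin : S.Finite)
    (hS : ∀ p ∈ S, p 1 ∈ Icc (0 : ℝ) 1) (h3 : (unitDiskGraph.induce S).CliqueFree 3) :
    (unitDiskGraph.induce S).Colorable 2 := by
  have := hfin.to_subtype
  let _ : IsStrictOrder S fun u v => FarLeftOf u v :=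
    { irrefl := fun u h => lt_irrefl _ h.1
      trans := fun u v w => FarLeftOf.trans (hS u u.2) (hS v v.2) (hS w w.2) }
  let _ : PartialOrder S := partialOrderOfSO fun u v => FarLeftOf u v
  refine SimpleGraph.colorable_two_of_adj_iff_incompRel (fun u v => ?_) h3
  change (u : ℝ²) ≠ v ∧ dist (u : ℝ²) v ≤ 2 ↔
    ¬(u = v ∨ FarLeftOf u v) ∧ ¬(v = u ∨ FarLeftOf v u)
  rw [dist_le_two_iff (hS u u.2) (hS v v.2), Subtype.coe_ne_coe]
  tauto

end UnitDiskStrip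

open UnitDiskStrip in
theorem stmt10 (P : Finset (EuclideanSpace ℝ (Fin 2)))
    (hy : ∀ p ∈ P, p 1 ∈ Set.Icc (0 : ℝ) 1) :
    ((unitDiskGraph.induce (↑P : Set (EuclideanSpace ℝ (Fin 2)))).CliqueFree 3 →
      (unitDiskGraph.induce (↑P : Set (EuclideanSpace ℝ (Fin 2)))).Colorable 2) ∧
    ∀ S : Set (EuclideanSpace ℝ (Fin 2)), S ⊆ ↑P →
      (unitDiskGraph.induce S).CliqueFree 3 → (unitDiskGraph.induce S).Colorable 2 := by
  have h : ∀ S ⊆ (P : Set (EuclideanSpace ℝ (Fin 2))), _ := fun S hSP =>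
    colorable_two_induce_of_cliqueFree (P.finite_toSet.subset hSP) fun p hp => hy p (hSP hp)
  exact ⟨h _ subset_rfl, h⟩
end

section
/- Let p₁, p₂, p₃, p₄ be four pairwise distinct points in ℝ² whose y-coordinates all lie in [0,1], with x-coordinates satisfying x(p₁) ≤ x(p₂) ≤ x(p₃) ≤ x(p₄), and suppose dist(p₁, p₄) ≤ 2. Then there is no 'claw' among these four points; that is, there do not exist a point c ∈ {p₁,p₂,p₃,p₄} and the three remaining points ℓ₁, ℓ₂, ℓ₃ such that dist(c, ℓᵢ) ≤ 2 for each i while dist(ℓᵢ, ℓⱼ) > 2 for all i ≠ j. (Equivalently, the unit-disk intersection graph induced on {p₁,p₂,p₃,p₄} contains no induced K₁,₃.) -/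
private lemma distSq (a b : EuclideanSpace ℝ (Fin 2)) :
    dist a b ^ 2 = (a 0 - b 0) ^ 2 + (a 1 - b 1) ^ 2 := by
  rw [EuclideanSpace.dist_eq, Real.sq_sqrt (by positivity)]
  simp [Fin.sum_univ_two, Real.dist_eq, sq_abs]

private lemma gap (a b : EuclideanSpace ℝ (Fin 2))
    (ha : a 1 ∈ Set.Icc (0:ℝ) 1) (hb : b 1 ∈ Set.Icc (0:ℝ) 1)
    (h : 2 < dist a b) : 3 < (a 0 - b 0) ^ 2 := by
  have h2 := distSq a b
  obtain ⟨ha1, ha2⟩ := ha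
  obtain ⟨hb1, hb2⟩ := hb
  nlinarith [dist_nonneg (x := a) (y := b)]

private lemma tri (u v w A B : ℝ) (hu : A ≤ u) (hu' : u ≤ B) (hv : A ≤ v)
    (hv' : v ≤ B) (hw : A ≤ w) (hw' : w ≤ B) (hB : B - A ≤ 2)
    (h1 : 3 < (u - v) ^ 2) (h2 : 3 < (u - w) ^ 2) (h3 : 3 < (v - w) ^ 2) : False := by
  rcases le_total u v with h | h <;> rcases le_total v w with h' | h' <;>
    rcases le_total u w with h'' | h'' <;>
    nlinarith [mul_nonneg (sub_nonneg.2 h) (sub_nonneg.2 h'),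
      sq_nonneg (u - v), sq_nonneg (v - w), sq_nonneg (u - w)]

theorem stmt11 (p₁ p₂ p₃ p₄ : EuclideanSpace ℝ (Fin 2))
    (hdist : p₁ ≠ p₂ ∧ p₁ ≠ p₃ ∧ p₁ ≠ p₄ ∧ p₂ ≠ p₃ ∧ p₂ ≠ p₄ ∧ p₃ ≠ p₄)
    (hy₁ : p₁ 1 ∈ Set.Icc (0 : ℝ) 1) (hy₂ : p₂ 1 ∈ Set.Icc (0 : ℝ) 1)
    (hy₃ : p₃ 1 ∈ Set.Icc (0 : ℝ) 1) (hy₄ : p₄ 1 ∈ Set.Icc (0 : ℝ) 1)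
    (hx₁₂ : p₁ 0 ≤ p₂ 0) (hx₂₃ : p₂ 0 ≤ p₃ 0) (hx₃₄ : p₃ 0 ≤ p₄ 0)
    (h₁₄ : dist p₁ p₄ ≤ 2) :
    ¬ ∃ c ℓ₁ ℓ₂ ℓ₃ : EuclideanSpace ℝ (Fin 2),
      ({c, ℓ₁, ℓ₂, ℓ₃} : Set (EuclideanSpace ℝ (Fin 2))) = {p₁, p₂, p₃, p₄} ∧
      dist c ℓ₁ ≤ 2 ∧ dist c ℓ₂ ≤ 2 ∧ dist c ℓ₃ ≤ 2 ∧
      2 < dist ℓ₁ ℓ₂ ∧ 2 < dist ℓ₁ ℓ₃ ∧ 2 < dist ℓ₂ ℓ₃ := by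
  rintro ⟨c, ℓ₁, ℓ₂, ℓ₃, hset, _, _, _, d12, d13, d23⟩
  have hB : p₄ 0 - p₁ 0 ≤ 2 := by
    have h2 := distSq p₁ p₄
    nlinarith [dist_nonneg (x := p₁) (y := p₄), sq_nonneg (p₁ 1 - p₄ 1)]
  have key : ∀ q : EuclideanSpace ℝ (Fin 2), q ∈ ({p₁, p₂, p₃, p₄} : Set _) →
      p₁ 0 ≤ q 0 ∧ q 0 ≤ p₄ 0 ∧ q 1 ∈ Set.Icc (0:ℝ) 1 := by
    rintro q (rfl | rfl | rfl | rfl)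
    · exact ⟨le_refl _, by linarith, hy₁⟩
    · exact ⟨hx₁₂, by linarith, hy₂⟩
    · exact ⟨by linarith, hx₃₄, hy₃⟩
    · exact ⟨by linarith, le_refl _, hy₄⟩
  have m1 := key ℓ₁ (hset ▸ (by simp : ℓ₁ ∈ ({c, ℓ₁, ℓ₂, ℓ₃} : Set _)))
  have m2 := key ℓ₂ (hset ▸ (by simp : ℓ₂ ∈ ({c, ℓ₁, ℓ₂, ℓ₃} : Set _)))
  have m3 := key ℓ₃ (hset ▸ (by simp : ℓ₃ ∈ ({c, ℓ₁, ℓ₂, ℓ₃} : Set _)))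
  exact tri (ℓ₁ 0) (ℓ₂ 0) (ℓ₃ 0) (p₁ 0) (p₄ 0) m1.1 m1.2.1 m2.1 m2.2.1 m3.1 m3.2.1
    hB (gap ℓ₁ ℓ₂ m1.2.2 m2.2.2 d12) (gap ℓ₁ ℓ₃ m1.2.2 m3.2.2 d13)
    (gap ℓ₂ ℓ₃ m2.2.2 m3.2.2 d23)
end

section
/- Let p, q₁, q₂, q₃, q₄ be five pairwise distinct points in ℝ² whose y-coordinates all lie in [0,1]. If dist(p, qᵢ) ≤ 2 for each i = 1,2,3,4, then there exist indices i ≠ j with dist(qᵢ, qⱼ) ≤ 2. (Equivalently, the unit-disk intersection graph of any finite set of points in ℝ × [0,1] contains no induced K₁,₄.) -/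
theorem stmt12 (p : EuclideanSpace ℝ (Fin 2)) (q : Fin 4 → EuclideanSpace ℝ (Fin 2))
    (hinj : Function.Injective q) (hpq : ∀ i, p ≠ q i)
    (hyp : p 1 ∈ Set.Icc (0 : ℝ) 1) (hyq : ∀ i, q i 1 ∈ Set.Icc (0 : ℝ) 1)
    (hd : ∀ i, dist p (q i) ≤ 2) :
    ∃ i j : Fin 4, i ≠ j ∧ dist (q i) (q j) ≤ 2 := by
  have hdist : ∀ a b : EuclideanSpace ℝ (Fin 2),
      dist a b = Real.sqrt ((a 0 - b 0)^2 + (a 1 - b 1)^2) := by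
    intro a b
    rw [EuclideanSpace.dist_eq, Fin.sum_univ_two]
    simp [Real.dist_eq, sq_abs]
  have hx : ∀ i, |q i 0 - p 0| ≤ 2 := by
    intro i
    have h := hd i
    rw [hdist p (q i)] at h
    have h4 : (p 0 - q i 0)^2 + (p 1 - q i 1)^2 ≤ 4 := by
      nlinarith [Real.sq_sqrt (by positivity : (0:ℝ) ≤ (p 0 - q i 0)^2 + (p 1 - q i 1)^2),
        Real.sqrt_nonneg ((p 0 - q i 0)^2 + (p 1 - q i 1)^2)]
    rw [abs_le]
    constructor <;> nlinarith [sq_nonneg (p 1 - q i 1)]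
  set f : Fin 4 → Fin 3 := fun i =>
    if q i 0 - p 0 ≤ -2/3 then 0 else if q i 0 - p 0 ≤ 2/3 then 1 else 2 with hf
  obtain ⟨i, j, hij, hfe⟩ := Fintype.exists_ne_map_eq_of_card_lt f (by norm_num)
  refine ⟨i, j, hij, ?_⟩
  have hxi := hx i
  have hxj := hx j
  rw [abs_le] at hxi hxj
  have hdx : |q i 0 - q j 0| ≤ 4/3 := by
    simp only [hf] at hfe
    rw [abs_le]
    split_ifs at hfe <;>
      first
        | exact absurd hfe (by decide)
        | constructor <;> linarith
  rw [abs_le] at hdx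
  obtain ⟨hyi1, hyi2⟩ := hyq i
  obtain ⟨hyj1, hyj2⟩ := hyq j
  rw [hdist]
  have hS : (q i 0 - q j 0)^2 + (q i 1 - q j 1)^2 ≤ 4 := by nlinarith
  calc Real.sqrt ((q i 0 - q j 0)^2 + (q i 1 - q j 1)^2) ≤ Real.sqrt 4 :=
        Real.sqrt_le_sqrt hS
    _ = 2 := by
        rw [show (4:ℝ) = 2^2 by norm_num, Real.sqrt_sq (by norm_num : (0:ℝ) ≤ 2)]
end

section
/- Let p₁, p₂, p₃, p₄, p₅ be five pairwise distinct points in ℝ² whose y-coordinates all lie in [0,1], with x-coordinates satisfying x(p₁) ≤ x(p₂) ≤ x(p₃) ≤ x(p₄) ≤ x(p₅). If dist(p₁, p₅) ≤ 2, then the points p₂, p₃, p₄ do not have pairwise distances all exceeding 2; that is, there exist i ≠ j in {2,3,4} with dist(pᵢ, pⱼ) ≤ 2. -/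
private lemma dist_le_two (a b : EuclideanSpace ℝ (Fin 2))
    (hx : (a 0 - b 0) ^ 2 ≤ 3) (hya : a 1 ∈ Set.Icc (0:ℝ) 1) (hyb : b 1 ∈ Set.Icc (0:ℝ) 1) :
    dist a b ≤ 2 := by
  rw [EuclideanSpace.dist_eq, Fin.sum_univ_two]
  have h : dist (a 0) (b 0) ^ 2 + dist (a 1) (b 1) ^ 2 ≤ 4 := by
    have h1 : dist (a 0) (b 0) ^ 2 = (a 0 - b 0) ^ 2 := by
      rw [Real.dist_eq, sq_abs]
    have h2 : dist (a 1) (b 1) ^ 2 ≤ 1 := by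
      rw [Real.dist_eq, sq_abs]
      obtain ⟨ha1, ha2⟩ := hya; obtain ⟨hb1, hb2⟩ := hyb
      nlinarith
    linarith [h1 ▸ hx, h2]
  calc Real.sqrt (dist (a 0) (b 0) ^ 2 + dist (a 1) (b 1) ^ 2) ≤ Real.sqrt 4 :=
        Real.sqrt_le_sqrt h
    _ = 2 := by rw [show (4:ℝ) = 2^2 by norm_num, Real.sqrt_sq (by norm_num)]

theorem stmt13 (p₁ p₂ p₃ p₄ p₅ : EuclideanSpace ℝ (Fin 2))
    (hdist : p₁ ≠ p₂ ∧ p₁ ≠ p₃ ∧ p₁ ≠ p₄ ∧ p₁ ≠ p₅ ∧ p₂ ≠ p₃ ∧ p₂ ≠ p₄ ∧ p₂ ≠ p₅ ∧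
      p₃ ≠ p₄ ∧ p₃ ≠ p₅ ∧ p₄ ≠ p₅)
    (hy₁ : p₁ 1 ∈ Set.Icc (0 : ℝ) 1) (hy₂ : p₂ 1 ∈ Set.Icc (0 : ℝ) 1)
    (hy₃ : p₃ 1 ∈ Set.Icc (0 : ℝ) 1) (hy₄ : p₄ 1 ∈ Set.Icc (0 : ℝ) 1)
    (hy₅ : p₅ 1 ∈ Set.Icc (0 : ℝ) 1)
    (hx₁₂ : p₁ 0 ≤ p₂ 0) (hx₂₃ : p₂ 0 ≤ p₃ 0) (hx₃₄ : p₃ 0 ≤ p₄ 0) (hx₄₅ : p₄ 0 ≤ p₅ 0)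
    (h₁₅ : dist p₁ p₅ ≤ 2) :
    dist p₂ p₃ ≤ 2 ∨ dist p₂ p₄ ≤ 2 ∨ dist p₃ p₄ ≤ 2 := by
  -- x-gap between p₁ and p₅ is at most 2
  have hx15 : p₅ 0 - p₁ 0 ≤ 2 := by
    have habs : |p₁ 0 - p₅ 0| ≤ dist p₁ p₅ := by
      rw [EuclideanSpace.dist_eq, Fin.sum_univ_two, ← Real.sqrt_sq_eq_abs]
      apply Real.sqrt_le_sqrt
      have h1 : dist (p₁ 0) (p₅ 0) ^ 2 = (p₁ 0 - p₅ 0) ^ 2 := by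
        rw [Real.dist_eq, sq_abs]
      linarith [sq_nonneg (dist (p₁ 1) (p₅ 1)), h1]
    have := abs_le.mp (habs.trans h₁₅)
    linarith [this.1]
  by_cases h : p₃ 0 - p₂ 0 ≤ 1
  · left
    exact dist_le_two _ _ (by nlinarith) hy₂ hy₃
  · right; right
    push_neg at h
    exact dist_le_two _ _ (by nlinarith) hy₃ hy₄
end

section
/- Let H be a finite simple graph with vertex set V and edge set E(H), and let G' be the simple graph on the disjoint union V ⊔ E(H) in which: two original vertices u, v ∈ V are adjacent in G' iff they are adjacent in H; an original vertex u ∈ V and an edge-vertex e ∈ E(H) are adjacent in G' iff u is an endpoint of e; and no two edge-vertices are adjacent. Then for every natural number k: H has an independent set of size at least k if and only if there exists a set S of vertices of G' with |S| ≥ k + |E(H)| such that the subgraph of G' induced by S is triangle-free (contains no three pairwise adjacent vertices). -/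
/-!
A triangle of `vertexEdgeGraph H` has at most one edge-vertex, so it contains an edge of `H`
between two of its original vertices; conversely every edge `uv` of `H` gives the triangle
`u, v, uv`. Hence an independent set `I` of `H` together with all edge-vertices is triangle-free.
Conversely, if `S` is triangle-free with original part `A`, no edge of `H[A]` is an edge-vertex
of `S`, so `|S| ≤ |A| + |E(H)| - |E(H[A])|`; deleting one endpoint of every edge of `H[A]`
leaves an independent set of size at least `|A| - |E(H[A])| ≥ |S| - |E(H)|`.
-/

/-- The graph `G'` on the disjoint union of the vertices and the edges of `H`:
two original vertices are adjacent iff they are adjacent in `H`; an original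
vertex and an edge-vertex are adjacent iff the vertex is an endpoint of the edge;
no two edge-vertices are adjacent. -/
def vertexEdgeGraph {V : Type*} (H : SimpleGraph V) : SimpleGraph (V ⊕ H.edgeSet) where
  Adj a b :=
    match a, b with
    | Sum.inl u, Sum.inl v => H.Adj u v
    | Sum.inl u, Sum.inr e => u ∈ (e : Sym2 V)
    | Sum.inr e, Sum.inl u => u ∈ (e : Sym2 V)
    | Sum.inr _, Sum.inr _ => False
  symm := by
    constructor
    rintro (u | e) (v | f) h
    · exact h.symm
    · exact h
    · exact h
    · exact h
  loopless := by
    constructor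
    rintro (u | e) h
    · exact H.irrefl h
    · exact h

open Finset

namespace SimpleGraph

variable {V : Type*} [DecidableEq V] (H : SimpleGraph V) [Fintype H.edgeSet]

theorem exists_isIndepSet_subset_card_le (s : Finset V) :
    ∃ I ⊆ s, H.IsIndepSet (I : Set V) ∧ #s ≤ #I + #(H.edgeFinset ∩ s.sym2) := by
  set P := H.edgeFinset ∩ s.sym2
  refine ⟨s \ P.image (fun e => e.out.1), sdiff_subset, ?_, ?_⟩
  · intro u hu v hv _ hadj
    simp only [coe_sdiff, Set.mem_sdiff, mem_coe, mem_image, not_exists, not_and] at hu hv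
    have huv : s(u, v) ∈ P := by
      simp only [P, mem_inter, mem_edgeFinset, mem_edgeSet, mem_sym2_iff, Sym2.mem_iff]
      exact ⟨hadj, by rintro w (rfl | rfl) <;> simp [hu.1, hv.1]⟩
    rcases Sym2.mem_iff.mp (Sym2.out_fst_mem s(u, v)) with h | h
    · exact hu.2 _ huv h
    · exact hv.2 _ huv h
  · calc #s ≤ #(s \ P.image (fun e => e.out.1)) + #(P.image (fun e => e.out.1)) :=
          card_le_card_sdiff_add_card
      _ ≤ #(s \ P.image (fun e => e.out.1)) + #P := by gcongr; exact card_image_le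

end SimpleGraph

namespace vertexEdgeGraph

open SimpleGraph

variable {V : Type*} (H : SimpleGraph V) {u v : V} {e f : H.edgeSet}

@[simp]
theorem adj_inl_inl : (vertexEdgeGraph H).Adj (.inl u) (.inl v) ↔ H.Adj u v := Iff.rfl

@[simp]
theorem adj_inl_inr : (vertexEdgeGraph H).Adj (.inl u) (.inr e) ↔ u ∈ (e : Sym2 V) := Iff.rfl

@[simp]
theorem adj_inr_inl : (vertexEdgeGraph H).Adj (.inr e) (.inl u) ↔ u ∈ (e : Sym2 V) := Iff.rfl

@[simp]
theorem not_adj_inr_inr : ¬(vertexEdgeGraph H).Adj (.inr e) (.inr f) := id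

theorem exists_adj_of_isNClique_three {t : Finset (V ⊕ H.edgeSet)}
    (ht : (vertexEdgeGraph H).IsNClique 3 t) :
    ∃ u v, .inl u ∈ t ∧ .inl v ∈ t ∧ H.Adj u v := by
  have hright : #t.toRight ≤ 1 := by
    refine card_le_one.mpr fun e he f hf => ?_
    by_contra hef
    exact not_adj_inr_inr H
      (ht.isClique (mem_toRight.mp he) (mem_toRight.mp hf) (Sum.inr_injective.ne hef))
  have hleft : 1 < #t.toLeft := by
    have := t.card_toLeft_add_card_toRight
    rw [ht.card_eq] at this
    omega
  obtain ⟨u, hu, v, hv, huv⟩ := one_lt_card.mp hleft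
  rw [mem_toLeft] at hu hv
  exact ⟨u, v, hu, hv, ht.isClique hu hv (Sum.inl_injective.ne huv)⟩

theorem isNClique_three_inl_inl_inr [DecidableEq V] (huv : H.Adj u v) :
    (vertexEdgeGraph H).IsNClique 3 {.inl u, .inl v, .inr ⟨s(u, v), huv⟩} := by
  simp [is3Clique_triple_iff, huv]

theorem card_toRight_add_card_edgeFinset_inter_le [DecidableEq V] [Fintype H.edgeSet]
    {S : Finset (V ⊕ H.edgeSet)} (hS : (vertexEdgeGraph H).CliqueFreeOn S 3) :
    #S.toRight + #(H.edgeFinset ∩ S.toLeft.sym2) ≤ #H.edgeFinset := by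
  have hdisj : Disjoint (S.toRight.map (.subtype _)) (H.edgeFinset ∩ S.toLeft.sym2) := by
    refine disjoint_left.mpr ?_
    rintro _ he hmem
    obtain ⟨⟨e, he'⟩, heS, rfl⟩ := mem_map.mp he
    induction e using Sym2.ind with
    | h u v =>
      simp only [mem_inter, mem_sym2_iff, mem_toLeft] at hmem
      refine hS ?_ (isNClique_three_inl_inl_inr H he')
      simp only [coe_insert, coe_singleton, Set.insert_subset_iff, Set.singleton_subset_iff,
        mem_coe]
      exact ⟨hmem.2 u (Sym2.mem_mk_left u v), hmem.2 v (Sym2.mem_mk_right u v), mem_toRight.mp heS⟩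
  calc #S.toRight + #(H.edgeFinset ∩ S.toLeft.sym2)
      = #(S.toRight.map (.subtype _) ∪ (H.edgeFinset ∩ S.toLeft.sym2)) := by
        rw [card_union_of_disjoint hdisj, card_map]
    _ ≤ #H.edgeFinset := by
        refine card_le_card (union_subset ?_ inter_subset_left)
        intro e he
        obtain ⟨f, -, rfl⟩ := mem_map.mp he
        exact mem_edgeFinset.mpr f.2

end vertexEdgeGraph

open SimpleGraph vertexEdgeGraph in
theorem stmt15 {V : Type*} [Fintype V] [DecidableEq V] (H : SimpleGraph V)
    [DecidableRel H.Adj] (k : ℕ) :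
    (∃ I : Finset V, (∀ u ∈ I, ∀ v ∈ I, ¬ H.Adj u v) ∧ k ≤ I.card) ↔
      (∃ S : Finset (V ⊕ H.edgeSet), k + H.edgeFinset.card ≤ S.card ∧
        ((vertexEdgeGraph H).induce (↑S : Set (V ⊕ H.edgeSet))).CliqueFree 3) := by
  constructor
  · rintro ⟨I, hI, hk⟩
    refine ⟨I.disjSum univ, ?_, (cliqueFree_induce_iff _ _ _).mpr fun t ht htri => ?_⟩
    · rw [card_disjSum, card_univ, ← edgeFinset_card]
      omega
    obtain ⟨u, v, hu, hv, huv⟩ := exists_adj_of_isNClique_three H htri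
    exact hI u (by simpa using ht hu) v (by simpa using ht hv) huv
  · rintro ⟨S, hk, hS⟩
    rw [cliqueFree_induce_iff] at hS
    obtain ⟨I, -, hI, hcard⟩ := H.exists_isIndepSet_subset_card_le S.toLeft
    refine ⟨I, fun u hu v hv huv => hI hu hv huv.ne huv, ?_⟩
    have := card_toRight_add_card_edgeFinset_inter_le H hS
    have := S.card_toLeft_add_card_toRight
    omega
end
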